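/- arXiv:1802.03296 — 2 statements merged into one kernel-verified Lean document; each statement's English description precedes it below -/
import Mathlib

section
/- Let X ⊆ ℝⁿ be a pointed closed convex set and ỹ ∈ ℝⁿ \ X. Then there exists a rational vector a ∈ ℚⁿ such that sup_{x∈X}⟨a,x⟩ < ⟨a,ỹ⟩. -/
open RealInnerProductSpace

noncomputable def supp {n : ℕ} (C : Set (EuclideanSpace ℝ (Fin n)))
    (a : EuclideanSpace ℝ (Fin n)) : EReal :=
  ⨆ x ∈ C, ((⟪a, x⟫ : ℝ) : EReal)

def barrierCone {n : ℕ} (C : Set (EuclideanSpace ℝ (Fin n))) :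
    Set (EuclideanSpace ℝ (Fin n)) :=
  {a | supp C a < ⊤}

def recCone {n : ℕ} (C : Set (EuclideanSpace ℝ (Fin n))) :
    Set (EuclideanSpace ℝ (Fin n)) :=
  {d | ∀ x ∈ C, ∀ t : ℝ, 0 ≤ t → x + t • d ∈ C}

/-!
Strict separation gives `b` with `sup_X ⟪b, ·⟫ < ⟪b, ỹ⟫`; the point is to perturb `b` into a
rational vector. Since the recession cone `K` of `X` is closed and pointed, its inner dual is
full-dimensional, so there is a ball of functionals that are negative on `K ∖ {0}`. A compactness
argument shows that these functionals are bounded above on `X` uniformly over the ball. Mixing `b`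
with a small multiple of this ball then yields a whole ball of functionals strictly separating `ỹ`
from `X`, and that ball contains a rational vector.
-/

open Metric Filter Topology Set

section InnerProductSpace

variable {E : Type*} [NormedAddCommGroup E] [InnerProductSpace ℝ E]

theorem tendsto_norm_atTop_of_natCast_lt_inner {a x : ℕ → E} {C : ℝ} (ha : ∀ k, ‖a k‖ ≤ C)
    (h : ∀ k : ℕ, (k : ℝ) < ⟪a k, x k⟫) : Tendsto (fun k => ‖x k‖) atTop atTop := by
  have hC : 0 < max C 1 := lt_max_of_lt_right one_pos
  refine tendsto_atTop_mono (fun k => ?_) (tendsto_natCast_atTop_atTop.atTop_div_const hC)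
  rw [div_le_iff₀ hC]
  calc (k : ℝ) ≤ ⟪a k, x k⟫ := (h k).le
    _ ≤ ‖a k‖ * ‖x k‖ := real_inner_le_norm _ _
    _ ≤ max C 1 * ‖x k‖ := by gcongr; exact (ha k).trans (le_max_left _ _)
    _ = ‖x k‖ * max C 1 := mul_comm _ _

theorem exists_ball_strictly_separating {X : Set E} {y b a₀ : E} {u M ρ : ℝ}
    (hb : ∀ x ∈ X, ⟪b, x⟫ ≤ u) (hu : u < ⟪b, y⟫) (hρ : 0 < ρ)
    (hM : ∀ q ∈ ball a₀ ρ, ∀ x ∈ X, ⟪q, x⟫ ≤ M) :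
    ∃ z r, 0 < r ∧ ∀ a ∈ ball z r, ∃ β, (∀ x ∈ X, ⟪a, x⟫ ≤ β) ∧ β < ⟪a, y⟫ := by
  set γ := ⟪b, y⟫ - u
  set K := M - ⟪a₀, y⟫ + ρ * ‖y‖
  -- `a = (1 - θ) • b + θ • q` with `q ∈ ball a₀ ρ`; `θ` makes `(1 - θ) * γ - θ * |K| = θ > 0`.
  set θ := γ / (γ + |K| + 1)
  have hγ : 0 < γ := sub_pos.2 hu
  have hθ0 : 0 < θ := by positivity
  have hθγ : θ * (γ + |K| + 1) = γ := div_mul_cancel₀ _ (by positivity)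
  have hθ1 : θ < 1 := (div_lt_one (by positivity)).2 (by linarith [abs_nonneg K])
  refine ⟨b + θ • (a₀ - b), θ * ρ, mul_pos hθ0 hρ, fun a ha => ?_⟩
  set q := a₀ + θ⁻¹ • (a - (b + θ • (a₀ - b)))
  have hq : q ∈ ball a₀ ρ := by
    rw [mem_ball, dist_eq_norm, add_sub_cancel_left, norm_smul, norm_inv,
      Real.norm_of_nonneg hθ0.le, inv_mul_lt_iff₀ hθ0, ← dist_eq_norm]
    exact ha
  have ha_eq : a = (1 - θ) • b + θ • q := by
    simp only [q, smul_add, smul_inv_smul₀ hθ0.ne', sub_smul, one_smul, smul_sub]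
    abel
  have hqy : ⟪a₀, y⟫ - ρ * ‖y‖ ≤ ⟪q, y⟫ := by
    have h := neg_le_of_abs_le ((abs_real_inner_le_norm (q - a₀) y).trans
      (mul_le_mul_of_nonneg_right (mem_ball_iff_norm.1 hq).le (norm_nonneg y)))
    rw [inner_sub_left] at h
    linarith
  refine ⟨(1 - θ) * u + θ * M, fun x hx => ?_, ?_⟩
  · rw [ha_eq, inner_add_left, real_inner_smul_left, real_inner_smul_left]
    exact add_le_add (mul_le_mul_of_nonneg_left (hb x hx) (by linarith))
      (mul_le_mul_of_nonneg_left (hM q hq x hx) hθ0.le)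
  · rw [ha_eq, inner_add_left, real_inner_smul_left, real_inner_smul_left]
    have h1 := mul_le_mul_of_nonneg_left hqy hθ0.le
    have h2 := mul_le_mul_of_nonneg_left (le_abs_self K) hθ0.le
    linarith

section Complete

variable [CompleteSpace E]

theorem exists_inner_lt_of_notMem {X : Set E} (hcl : IsClosed X) (hconv : Convex ℝ X) {y : E}
    (hy : y ∉ X) : ∃ b u, (∀ x ∈ X, ⟪b, x⟫ < u) ∧ u < ⟪b, y⟫ := by
  obtain ⟨f, u, hfX, hfy⟩ := geometric_hahn_banach_closed_point hconv hcl hy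
  exact ⟨(InnerProductSpace.toDual ℝ E).symm f, u, by simpa using hfX, by simpa using hfy⟩

theorem inner_pos_of_mem_interior_innerDual {s : Set E} {y d : E}
    (hy : y ∈ interior (ProperCone.innerDual s : Set E)) (hd : d ∈ s) (hd0 : d ≠ 0) :
    0 < ⟪d, y⟫ := by
  have hlim : Tendsto (fun ε : ℝ => y - ε • d) (𝓝[>] 0) (𝓝 y) := by
    have : Continuous fun ε : ℝ => y - ε • d := by fun_prop
    simpa using (this.tendsto 0).mono_left nhdsWithin_le_nhds
  obtain ⟨ε, hεD, hε⟩ :=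
    ((hlim.eventually (mem_interior_iff_mem_nhds.mp hy)).and self_mem_nhdsWithin).exists
  have hle : 0 ≤ ⟪d, y - ε • d⟫ := hεD hd
  rw [inner_sub_right, real_inner_smul_right, real_inner_self_eq_norm_sq] at hle
  have : 0 < ε * ‖d‖ ^ 2 := by have := norm_pos_iff.2 hd0; positivity
  linarith

end Complete

section FiniteDimensional

variable [FiniteDimensional ℝ E]

theorem ProperCone.span_innerDual_eq_top {C : ProperCone ℝ E}
    (hC : (C : ConvexCone ℝ E).Salient) :
    Submodule.span ℝ (ProperCone.innerDual (C : Set E) : Set E) = ⊤ := by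
  rw [← Submodule.orthogonal_eq_bot_iff, Submodule.eq_bot_iff]
  intro v hv
  have mem_of_orthogonal :
      ∀ w ∈ (Submodule.span ℝ (innerDual (C : Set E) : Set E))ᗮ, w ∈ C := by
    intro w hw
    rw [← C.innerDual_innerDual]
    exact fun y hy => ((Submodule.mem_orthogonal _ _).mp hw y (Submodule.subset_span hy)).ge
  by_contra hv0
  exact hC v (mem_of_orthogonal v hv) hv0 (mem_of_orthogonal (-v) (neg_mem hv))

theorem ProperCone.interior_innerDual_nonempty {C : ProperCone ℝ E}
    (hC : (C : ConvexCone ℝ E).Salient) :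
    (interior (ProperCone.innerDual (C : Set E) : Set E)).Nonempty := by
  rw [(innerDual _).convex.interior_nonempty_iff_affineSpan_eq_top,
    AffineSubspace.affineSpan_eq_top_iff_vectorSpan_eq_top_of_nonempty ℝ E E
      (innerDual _).nonempty,
    vectorSpan_eq_span_vsub_set_right ℝ (zero_mem _)]
  simpa using span_innerDual_eq_top hC

theorem ProperCone.exists_closedBall_inner_neg {C : ProperCone ℝ E}
    (hC : (C : ConvexCone ℝ E).Salient) :
    ∃ c r, 0 < r ∧ ∀ a ∈ closedBall c r, ∀ d ∈ C, d ≠ 0 → ⟪a, d⟫ < 0 := by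
  obtain ⟨c, hc⟩ := interior_innerDual_nonempty hC
  obtain ⟨r, hr, hball⟩ := Metric.isOpen_iff.mp isOpen_interior c hc
  refine ⟨-c, r / 2, half_pos hr, fun a ha d hd hd0 => ?_⟩
  have hna : -a ∈ ball c r := by
    rw [mem_closedBall, dist_eq_norm, sub_neg_eq_add] at ha
    rw [mem_ball, dist_eq_norm, ← neg_add', norm_neg]
    linarith
  have := inner_pos_of_mem_interior_innerDual (hball hna) hd hd0
  rwa [inner_neg_right, neg_pos, real_inner_comm] at this

end FiniteDimensional

end InnerProductSpace

theorem dense_setOf_forall_exists_rat {ι : Type*} :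
    Dense {a : EuclideanSpace ℝ ι | ∀ i, ∃ q : ℚ, a i = q} := by
  have h : Dense (pi univ fun _ : ι => range ((↑) : ℚ → ℝ)) :=
    dense_pi univ fun _ _ => Rat.denseRange_cast
  convert h.preimage (PiLp.homeomorph 2 fun _ : ι => ℝ).isOpenMap using 1
  ext a
  simp [eq_comm, PiLp.homeomorph]

section RecessionCone

variable {n : ℕ} {X : Set (EuclideanSpace ℝ (Fin n))}

theorem supp_le_of_forall_inner_le {a : EuclideanSpace ℝ (Fin n)} {β : ℝ}
    (h : ∀ x ∈ X, ⟪a, x⟫ ≤ β) : supp X a ≤ β :=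
  iSup₂_le fun x hx => EReal.coe_le_coe_iff.mpr (h x hx)

def recProperCone (hcl : IsClosed X) : ProperCone ℝ (EuclideanSpace ℝ (Fin n)) where
  carrier := recCone X
  zero_mem' := fun x hx t _ => by simpa using hx
  add_mem' := fun {d₁ d₂} h₁ h₂ x hx t ht => by
    simpa [smul_add, add_assoc] using h₂ _ (h₁ x hx t ht) t ht
  smul_mem' := fun c d hd x hx t ht => by
    have h := hd x hx (t * c) (mul_nonneg ht c.2)
    rw [← smul_smul] at h
    exact h
  isClosed' := by
    simp only [recCone, ofPred_forall]
    exact isClosed_iInter fun x => isClosed_iInter fun _ => isClosed_iInter fun t =>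
      isClosed_iInter fun _ => hcl.preimage (by fun_prop)

theorem recProperCone_salient (hcl : IsClosed X) (hpt : recCone X ∩ (-recCone X) = {0}) :
    (recProperCone hcl : ConvexCone ℝ (EuclideanSpace ℝ (Fin n))).Salient := by
  intro d hd hd0 hnd
  have : d ∈ recCone X ∩ (-recCone X) := ⟨hd, hnd⟩
  rw [hpt] at this
  exact hd0 this

theorem mem_recCone_of_tendsto (hcl : IsClosed X) (hconv : Convex ℝ X)
    {x : ℕ → EuclideanSpace ℝ (Fin n)} (hx : ∀ k, x k ∈ X)
    (hnorm : Tendsto (fun k => ‖x k‖) atTop atTop) {d : EuclideanSpace ℝ (Fin n)}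
    (hd : Tendsto (fun k => ‖x k‖⁻¹ • x k) atTop (𝓝 d)) : d ∈ recCone X := by
  intro x₀ hx₀ t ht
  have hmem : ∀ᶠ k in atTop, x₀ + (t * ‖x k‖⁻¹) • (x k - x₀) ∈ X := by
    filter_upwards [hnorm.eventually_ge_atTop t, hnorm.eventually_gt_atTop 0] with k hkt hk0
    refine hconv.add_smul_sub_mem hx₀ (hx k) ⟨by positivity, ?_⟩
    rw [← div_eq_mul_inv]
    exact div_le_one_of_le₀ hkt hk0.le
  have hlim : Tendsto (fun k => x₀ + (t * ‖x k‖⁻¹) • (x k - x₀)) atTop (𝓝 (x₀ + t • d)) := by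
    have := tendsto_const_nhds (x := x₀) |>.add
      ((hd.const_smul t).sub ((hnorm.inv_tendsto_atTop.const_mul t).smul_const x₀))
    simpa only [Pi.inv_apply, mul_zero, zero_smul, sub_zero, smul_sub, smul_smul] using this
  exact hcl.mem_of_tendsto hlim hmem

theorem exists_inner_le_of_inner_neg_on_recCone (hcl : IsClosed X) (hconv : Convex ℝ X)
    {a₀ : EuclideanSpace ℝ (Fin n)} {ρ : ℝ}
    (hneg : ∀ a ∈ closedBall a₀ ρ, ∀ d ∈ recCone X, d ≠ 0 → ⟪a, d⟫ < 0) :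
    ∃ M, ∀ a ∈ closedBall a₀ ρ, ∀ x ∈ X, ⟪a, x⟫ ≤ M := by
  by_contra! hM
  choose a ha x hx hax using fun k : ℕ => hM k
  have hxnorm :=
    tendsto_norm_atTop_of_natCast_lt_inner (fun k => norm_le_of_mem_closedBall (ha k)) hax
  -- A limit `(a', d)` of `(a k, x k / ‖x k‖)` has `d` a unit recession direction, `⟪a', d⟫ ≥ 0`.
  set v := fun k => ‖x k‖⁻¹ • x k
  have hv : ∀ k, v k ∈ sphere 0 1 := fun k => by
    have : x k ≠ 0 := fun h => (Nat.cast_nonneg k).not_gt (by simpa [h] using hax k)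
    simp [v, norm_smul, this]
  obtain ⟨⟨a', d⟩, ⟨ha', hd⟩, φ, hφ, hlim⟩ :=
    ((isCompact_closedBall a₀ ρ).prod (isCompact_sphere 0 1)).tendsto_subseq
      (x := fun k => (a k, v k)) fun k => ⟨ha k, hv k⟩
  have hdrec : d ∈ recCone X := mem_recCone_of_tendsto hcl hconv (fun k => hx (φ k))
    (hxnorm.comp hφ.tendsto_atTop) ((continuous_snd.tendsto _).comp hlim)
  have hnonneg : 0 ≤ ⟪a', d⟫ := by
    refine ge_of_tendsto (((continuous_fst.tendsto _).comp hlim).inner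
      ((continuous_snd.tendsto _).comp hlim)) (Eventually.of_forall fun k => ?_)
    simp only [Function.comp, v, real_inner_smul_right]
    exact mul_nonneg (by positivity) ((Nat.cast_nonneg _).trans (hax _).le)
  exact (hneg a' ha' d hdrec (fun h => by simp [h] at hd)).not_ge hnonneg

end RecessionCone

theorem stmt9 {n : ℕ} (X : Set (EuclideanSpace ℝ (Fin n)))
    (hcl : IsClosed X) (hconv : Convex ℝ X)
    (hpt : recCone X ∩ (-recCone X) = {0})
    (ytil : EuclideanSpace ℝ (Fin n)) (hy : ytil ∉ X) :
    ∃ a : EuclideanSpace ℝ (Fin n), (∀ i, ∃ q : ℚ, a i = (q : ℝ)) ∧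
      supp X a < ((⟪a, ytil⟫ : ℝ) : EReal) := by
  obtain ⟨b, u, hb, hu⟩ := exists_inner_lt_of_notMem hcl hconv hy
  obtain ⟨a₀, ρ, hρ, hneg⟩ :=
    (recProperCone hcl).exists_closedBall_inner_neg (recProperCone_salient hcl hpt)
  obtain ⟨M, hM⟩ := exists_inner_le_of_inner_neg_on_recCone hcl hconv hneg
  obtain ⟨z, r, hr, hsep⟩ := exists_ball_strictly_separating (fun x hx => (hb x hx).le) hu hρ
    fun q hq => hM q (ball_subset_closedBall hq)
  obtain ⟨a, ha, haz⟩ :=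
    dense_setOf_forall_exists_rat.exists_mem_open isOpen_ball ⟨z, mem_ball_self hr⟩
  obtain ⟨β, hβX, hβy⟩ := hsep a haz
  exact ⟨a, ha, (supp_le_of_forall_inner_le hβX).trans_lt (EReal.coe_lt_coe_iff.mpr hβy)⟩
end

section
/- If C ⊆ ℝⁿ is a nonempty pointed closed convex set, then there exist d ∈ ℝⁿ and ε > 0 with d + εB ⊆ int(B_C), where B_C is the barrier cone of C, and the support function δ*(·|C) is bounded above on d + εB. -/
open RealInnerProductSpace

section Aux

open Filter Topology

variable {n : ℕ} {C : Set (EuclideanSpace ℝ (Fin n))}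

lemma recCone_zero_mem : (0 : EuclideanSpace ℝ (Fin n)) ∈ recCone C := by
  intro x hx t ht; simpa using hx

lemma recCone_add {d₁ d₂ : EuclideanSpace ℝ (Fin n)} (h₁ : d₁ ∈ recCone C)
    (h₂ : d₂ ∈ recCone C) : d₁ + d₂ ∈ recCone C := by
  intro x hx t ht
  have : x + t • d₁ + t • d₂ ∈ C := h₂ _ (h₁ x hx t ht) t ht
  simpa [smul_add, add_assoc] using this

lemma recCone_smul {c : ℝ} (hc : 0 ≤ c) {d : EuclideanSpace ℝ (Fin n)}
    (hd : d ∈ recCone C) : c • d ∈ recCone C := by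
  intro x hx t ht
  have : x + (t * c) • d ∈ C := hd x hx (t * c) (mul_nonneg ht hc)
  simpa [smul_smul] using this

lemma recCone_isClosed (hcl0 : IsClosed C) : IsClosed (recCone C : Set (EuclideanSpace ℝ (Fin n))) := by
  have : (recCone C : Set (EuclideanSpace ℝ (Fin n))) =
      ⋂ (x ∈ C) (t : {t : ℝ // 0 ≤ t}), {d | x + (t : ℝ) • d ∈ C} := by
    ext d
    simp only [recCone, Set.mem_setOf_eq, Set.mem_iInter]
    constructor
    · intro h x hx t; exact h x hx t t.2
    · intro h x hx t ht; exact h x hx ⟨t, ht⟩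
  rw [this]
  refine isClosed_biInter fun x hx => isClosed_iInter fun t => ?_
  have : {d : EuclideanSpace ℝ (Fin n) | x + (t : ℝ) • d ∈ C}
      = (fun d : EuclideanSpace ℝ (Fin n) => x + (t : ℝ) • d) ⁻¹' C := rfl
  rw [this]
  exact IsClosed.preimage (continuous_const.add (continuous_const_smul _)) hcl0

/-- The recession cone as a `ConvexCone`. -/
noncomputable def recConvexCone (C : Set (EuclideanSpace ℝ (Fin n))) :
    ConvexCone ℝ (EuclideanSpace ℝ (Fin n)) where
  carrier := recCone C
  smul_mem' c hc d hd := recCone_smul (le_of_lt hc) hd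
  add_mem' _ h₁ _ h₂ := recCone_add h₁ h₂

/-- Separation: there is a vector making a uniformly negative angle with the
recession cone. -/
lemma sep (hcl : IsClosed C) (hpt : recCone C ∩ (-recCone C) = {0}) :
    ∃ (a : EuclideanSpace ℝ (Fin n)) (δ : ℝ), 0 < δ ∧
      ∀ d ∈ recCone C, ⟪a, d⟫ ≤ -δ * ‖d‖ := by
  set K := recConvexCone C with hK
  have hKne : (K : Set (EuclideanSpace ℝ (Fin n))).Nonempty := ⟨0, recCone_zero_mem⟩
  have hKcl : IsClosed (K : Set (EuclideanSpace ℝ (Fin n))) := recCone_isClosed hcl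
  set P : Set (EuclideanSpace ℝ (Fin n)) :=
    (ProperCone.innerDual (K : Set (EuclideanSpace ℝ (Fin n))) :
      Set (EuclideanSpace ℝ (Fin n))) with hP
  have hPconv : Convex ℝ P :=
    (ProperCone.innerDual (K : Set (EuclideanSpace ℝ (Fin n)))).convex
  have h0P : (0 : EuclideanSpace ℝ (Fin n)) ∈ P := (ProperCone.innerDual _).zero_mem
  have hint : (interior P).Nonempty := by
    by_contra h
    have hspan : affineSpan ℝ P ≠ ⊤ := fun htop =>
      h (hPconv.interior_nonempty_iff_affineSpan_eq_top.mpr htop)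
    have hvs : vectorSpan ℝ P ≠ ⊤ := fun htop =>
      hspan ((AffineSubspace.affineSpan_eq_top_iff_vectorSpan_eq_top_of_nonempty ℝ (EuclideanSpace ℝ (Fin n)) (EuclideanSpace ℝ (Fin n)) ⟨0, h0P⟩).mpr htop)
    obtain ⟨v, hvmem, hv0⟩ := Submodule.exists_mem_ne_zero_of_ne_bot (p := (vectorSpan ℝ P)ᗮ)
      (by rw [Ne, Submodule.orthogonal_eq_bot_iff]; exact hvs)
    have hvorth : ∀ y ∈ P, ⟪y, v⟫ = 0 := by
      intro y hy
      have hyv : y ∈ vectorSpan ℝ P := by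
        have := vsub_mem_vectorSpan ℝ hy h0P
        simpa using this
      exact ((Submodule.mem_orthogonal _ _).mp hvmem y hyv).symm ▸
        (Submodule.mem_orthogonal _ _).mp hvmem y hyv
    have hbip : (ProperCone.innerDual P : Set (EuclideanSpace ℝ (Fin n))) = recCone C := by
      let K' : ProperCone ℝ (EuclideanSpace ℝ (Fin n)) :=
        { toSubmodule := K.toPointedCone recCone_zero_mem, isClosed' := hKcl }
      exact congrArg (fun S : ProperCone ℝ (EuclideanSpace ℝ (Fin n)) =>
        (S : Set (EuclideanSpace ℝ (Fin n)))) (ProperCone.innerDual_innerDual K')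
    have hv : v ∈ recCone C := by
      have : v ∈ (ProperCone.innerDual P : Set (EuclideanSpace ℝ (Fin n))) :=
        ProperCone.mem_innerDual.mpr fun y hy => (hvorth y hy).ge
      rw [hbip] at this; exact this
    have hv' : -v ∈ recCone C := by
      have : -v ∈ (ProperCone.innerDual P : Set (EuclideanSpace ℝ (Fin n))) := by
        refine ProperCone.mem_innerDual.mpr fun y hy => ?_
        rw [inner_neg_right, hvorth y hy, neg_zero]
      rw [hbip] at this; exact this
    have : v ∈ recCone C ∩ (-recCone C) := ⟨hv, by simpa [Set.mem_neg] using hv'⟩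
    rw [hpt] at this
    exact hv0 this
  obtain ⟨a₀, ha₀⟩ := hint
  obtain ⟨ε, hε, hball⟩ := Metric.isOpen_iff.mp isOpen_interior a₀ ha₀
  refine ⟨-a₀, ε / 2, by positivity, ?_⟩
  intro d hd
  rcases eq_or_ne d 0 with rfl | hd0
  · simp
  · have hnd : (0:ℝ) < ‖d‖ := norm_pos_iff.mpr hd0
    have hb : a₀ - (ε / 2 * ‖d‖⁻¹) • d ∈ P := by
      refine interior_subset (hball ?_)
      rw [Metric.mem_ball, dist_eq_norm]
      have h1 : a₀ - (ε / 2 * ‖d‖⁻¹) • d - a₀ = -((ε / 2 * ‖d‖⁻¹) • d) := by abel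
      rw [h1, norm_neg, norm_smul, Real.norm_eq_abs,
        abs_of_nonneg (by positivity : (0:ℝ) ≤ ε / 2 * ‖d‖⁻¹)]
      rw [mul_assoc, inv_mul_cancel₀ hnd.ne', mul_one]
      linarith
    have hdb : 0 ≤ ⟪d, a₀ - (ε / 2 * ‖d‖⁻¹) • d⟫ := ProperCone.mem_innerDual.mp hb hd
    rw [inner_sub_right, real_inner_smul_right, real_inner_self_eq_norm_mul_norm] at hdb
    have hinner : ε / 2 * ‖d‖ ≤ ⟪d, a₀⟫ := by
      have h2 : ε / 2 * ‖d‖⁻¹ * (‖d‖ * ‖d‖) = ε / 2 * ‖d‖ := by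
        field_simp
      linarith [hdb, h2.symm ▸ hdb]
    rw [inner_neg_left, real_inner_comm]
    linarith

/-- Limits of normalized unbounded sequences in `C` are recession directions. -/
lemma recCone_of_tendsto (hcl : IsClosed C) (hconv : Convex ℝ C)
    {x : ℕ → EuclideanSpace ℝ (Fin n)} (hx : ∀ k, x k ∈ C)
    (hn : Tendsto (fun k => ‖x k‖) atTop atTop)
    {d : EuclideanSpace ℝ (Fin n)}
    (hd : Tendsto (fun k => ‖x k‖⁻¹ • x k) atTop (𝓝 d)) : d ∈ recCone C := by
  intro z hz t ht
  rcases eq_or_lt_of_le ht with rfl | ht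
  · simpa using hz
  · -- z + t • d is a limit of convex combinations
    have hmem : ∀ᶠ k in atTop, z + t • (‖x k‖⁻¹ • x k) - (t * ‖x k‖⁻¹) • z ∈ C := by
      filter_upwards [hn.eventually_ge_atTop t] with k hk
      have hnk : (0:ℝ) < ‖x k‖ := lt_of_lt_of_le ht hk
      have h01 : t * ‖x k‖⁻¹ ≤ 1 := by
        rw [← div_eq_mul_inv, div_le_one hnk]; exact hk
      have h0 : 0 ≤ t * ‖x k‖⁻¹ := mul_nonneg ht.le (by positivity)
      have := hconv hz (hx k) (by linarith : 0 ≤ 1 - t * ‖x k‖⁻¹) h0 (by ring)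
      have heq : (1 - t * ‖x k‖⁻¹) • z + (t * ‖x k‖⁻¹) • x k
          = z + t • (‖x k‖⁻¹ • x k) - (t * ‖x k‖⁻¹) • z := by
        rw [smul_smul]; module
      rwa [heq] at this
    have hlim : Tendsto (fun k => z + t • (‖x k‖⁻¹ • x k) - (t * ‖x k‖⁻¹) • z)
        atTop (𝓝 (z + t • d)) := by
      have h1 : Tendsto (fun k => (t * ‖x k‖⁻¹)) atTop (𝓝 0) := by
        have : Tendsto (fun k => ‖x k‖⁻¹) atTop (𝓝 0) := hn.inv_tendsto_atTop
        simpa using (this.const_mul t)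
      have h2 : Tendsto (fun k => (t * ‖x k‖⁻¹) • z) atTop (𝓝 ((0:ℝ) • z)) :=
        h1.smul_const z
      simpa using ((tendsto_const_nhds.add (hd.const_smul t)).sub h2)
    exact hcl.mem_of_tendsto hlim hmem

end Aux

theorem stmt19 {n : ℕ} (C : Set (EuclideanSpace ℝ (Fin n)))
    (hne : C.Nonempty) (hcl : IsClosed C) (hconv : Convex ℝ C)
    (hpt : recCone C ∩ (-recCone C) = {0}) :
    ∃ (d : EuclideanSpace ℝ (Fin n)) (ε : ℝ), 0 < ε ∧
      Metric.closedBall d ε ⊆ interior (barrierCone C) ∧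
      ∃ M : ℝ, ∀ a ∈ Metric.closedBall d ε, supp C a ≤ ((M : ℝ) : EReal) := by
  classical
  obtain ⟨a, δ, hδ, ha⟩ := sep hcl hpt
  have key : ∃ M : ℝ, ∀ b ∈ Metric.closedBall a (δ / 2), ∀ x ∈ C, ⟪b, x⟫ ≤ M := by
    by_contra h
    push_neg at h
    choose b hb x hx hbx using fun k : ℕ => h (k : ℝ)
    have hbn : ∀ k, ‖b k‖ ≤ ‖a‖ + δ / 2 := by
      intro k
      have h1 : dist (b k) a ≤ δ / 2 := Metric.mem_closedBall.mp (hb k)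
      have h2 : ‖b k - a‖ ≤ δ / 2 := by rwa [← dist_eq_norm]
      calc ‖b k‖ = ‖b k - a + a‖ := by rw [sub_add_cancel]
        _ ≤ ‖b k - a‖ + ‖a‖ := norm_add_le _ _
        _ ≤ ‖a‖ + δ / 2 := by linarith
    set c : ℝ := ‖a‖ + δ / 2 + 1 with hc
    have hcpos : 0 < c := by positivity
    have hxk : ∀ k : ℕ, (k : ℝ) / c ≤ ‖x k‖ := by
      intro k
      have h1 : (k : ℝ) < ⟪b k, x k⟫ := hbx k
      have h2 : ⟪b k, x k⟫ ≤ ‖b k‖ * ‖x k‖ := real_inner_le_norm _ _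
      have h3 : ‖b k‖ * ‖x k‖ ≤ c * ‖x k‖ :=
        mul_le_mul_of_nonneg_right (by rw [hc]; linarith [hbn k]) (norm_nonneg _)
      rw [div_le_iff₀ hcpos]
      nlinarith
    have hnorm : Filter.Tendsto (fun k => ‖x k‖) Filter.atTop Filter.atTop :=
      Filter.tendsto_atTop_mono hxk
        (Filter.Tendsto.atTop_div_const hcpos tendsto_natCast_atTop_atTop)
    have hx0 : ∀ k, x k ≠ 0 := by
      intro k hk0
      have h1 : (k : ℝ) < ⟪b k, x k⟫ := hbx k
      rw [hk0, inner_zero_right] at h1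
      exact absurd h1 (not_lt.mpr (Nat.cast_nonneg k))
    set y : ℕ → EuclideanSpace ℝ (Fin n) := fun k => ‖x k‖⁻¹ • x k with hy
    have hys : ∀ k, y k ∈ Metric.sphere (0 : EuclideanSpace ℝ (Fin n)) 1 := by
      intro k
      rw [mem_sphere_zero_iff_norm, hy, norm_smul, norm_inv, norm_norm,
        inv_mul_cancel₀ (norm_ne_zero_iff.mpr (hx0 k))]
    have hcomp : IsCompact (Metric.closedBall a (δ / 2) ×ˢ
        Metric.sphere (0 : EuclideanSpace ℝ (Fin n)) 1) :=
      (isCompact_closedBall _ _).prod (isCompact_sphere _ _)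
    obtain ⟨⟨b', d⟩, hmem, φ, hφ, hlim⟩ :=
      hcomp.tendsto_subseq (x := fun k => (b k, y k)) (fun k => ⟨hb k, hys k⟩)
    have hblim : Filter.Tendsto (fun k => b (φ k)) Filter.atTop (nhds b') :=
      (continuous_fst.tendsto _).comp hlim
    have hylim : Filter.Tendsto (fun k => y (φ k)) Filter.atTop (nhds d) :=
      (continuous_snd.tendsto _).comp hlim
    have hd1 : ‖d‖ = 1 := mem_sphere_zero_iff_norm.mp hmem.2
    have hdrec : d ∈ recCone C := by
      refine recCone_of_tendsto hcl hconv (x := fun k => x (φ k))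
        (fun k => hx (φ k)) (hnorm.comp hφ.tendsto_atTop) ?_
      exact hylim
    have hpos : 0 ≤ ⟪b', d⟫ := by
      have hcont : Filter.Tendsto (fun k => ⟪b (φ k), y (φ k)⟫) Filter.atTop
          (nhds ⟪b', d⟫) := hblim.inner hylim
      refine ge_of_tendsto hcont (Filter.Eventually.of_forall fun k => ?_)
      have h1 : (0 : ℝ) ≤ ⟪b (φ k), x (φ k)⟫ :=
        le_of_lt (lt_of_le_of_lt (Nat.cast_nonneg _) (hbx (φ k)))
      rw [hy, real_inner_smul_right]
      exact mul_nonneg (inv_nonneg.mpr (norm_nonneg _)) h1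
    have hneg : ⟪b', d⟫ < 0 := by
      have h1 : ⟪a, d⟫ ≤ -δ * ‖d‖ := ha d hdrec
      have h2 : ⟪b' - a, d⟫ ≤ ‖b' - a‖ * ‖d‖ := real_inner_le_norm _ _
      have h3 : ‖b' - a‖ ≤ δ / 2 := by
        rw [← dist_eq_norm]; exact Metric.mem_closedBall.mp hmem.1
      have h4 : ⟪b', d⟫ = ⟪a, d⟫ + ⟪b' - a, d⟫ := by
        rw [← inner_add_left]; norm_num
      rw [hd1] at h1 h2
      nlinarith
    linarith
  obtain ⟨M, hM⟩ := key
  have hsuppM : ∀ b ∈ Metric.closedBall a (δ / 2), supp C b ≤ ((M : ℝ) : EReal) := by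
    intro b hbmem
    refine iSup₂_le fun z hz => ?_
    exact_mod_cast EReal.coe_le_coe_iff.mpr (hM b hbmem z hz)
  refine ⟨a, δ / 4, by positivity, ?_, M, ?_⟩
  · have hsub : Metric.ball a (δ / 2) ⊆ barrierCone C := by
      intro b' hb'
      exact lt_of_le_of_lt (hsuppM b' (Metric.ball_subset_closedBall hb'))
        (EReal.coe_lt_top M)
    exact fun b hbmem => interior_maximal hsub Metric.isOpen_ball
      (Metric.closedBall_subset_ball (by linarith) hbmem)
  · intro b hbmem
    exact hsuppM b (Metric.closedBall_subset_closedBall (by linarith) hbmem)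
end
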